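/- Let μ > 0, γ > 0 and, for ω > ω₀ = 4/γ², define for ω ∈ (ω₀, ω*] (with ω* = 4(μ+1)/(γ²μ)) the function r(ω) = ((2−μ)/(2μ)) ∫_{2/(γ√ω)}^{1} (1−t²)^{1/μ−1} dt + (γ√ω)⁻¹ (1 − 4/(γ²ω))^{1/μ−1}. Then r'(ω) = −(γω^{3/2})⁻¹ (1 − 1/μ)(1 − 4/(γ²ω))^{1/μ−2}, so r is strictly decreasing on (ω₀, ω*] whenever μ > 1. -/

import Mathlib

/-!
Substitute `x = 2 / (γ √ω)`, so that `1 - 4 / (γ² ω) = 1 - x²` and, with `p = 1/μ - 1`,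
`r(ω) = profile p x = (p + 1/2) ∫_x^1 (1 - t²)^p dt + (x/2) (1 - x²)^p`.
By the fundamental theorem of calculus the `(1 - x²)^p` terms of the derivative in `x`
cancel exactly, leaving `-p (1 - x²)^(p-1)`; the chain rule with `dx/dω = -(γ ω^(3/2))⁻¹`
gives `r'`, which is negative when `μ > 1`.
-/

open Set intervalIntegral MeasureTheory

theorem intervalIntegrable_one_sub_sq_rpow {p a : ℝ} (hp : -1 < p) (ha : -1 < a) (ha1 : a ≤ 1) :
    IntervalIntegrable (fun t : ℝ => (1 - t ^ 2) ^ p) volume a 1 := by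
  have hsing : IntervalIntegrable (fun t : ℝ => (1 - t) ^ p) volume a 1 := by
    simpa using (intervalIntegrable_rpow' (a := 1 - a) (b := 0) hp).comp_sub_left 1
  have hreg : ContinuousOn (fun t : ℝ => (1 + t) ^ p) (uIcc a 1) := by
    rw [uIcc_of_le ha1]
    exact fun t ht => (ContinuousAt.rpow_const (f := fun t : ℝ => 1 + t) (by fun_prop)
      (Or.inl (by linarith [ht.1]))).continuousWithinAt
  refine (hsing.mul_continuousOn hreg).congr fun t ht => ?_
  rw [uIoc_of_le ha1] at ht
  rw [← Real.mul_rpow (by linarith [ht.2]) (by linarith [ht.1])]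
  ring_nf

theorem hasDerivAt_integral_one_sub_sq_rpow {p u : ℝ} (hp : -1 < p) (hu : -1 < u) (hu1 : u < 1) :
    HasDerivAt (fun x => ∫ t in x..1, (1 - t ^ 2) ^ p) (-(1 - u ^ 2) ^ p) u :=
  integral_hasDerivAt_left (intervalIntegrable_one_sub_sq_rpow hp hu hu1.le)
    ((by fun_prop : Measurable fun t : ℝ => (1 - t ^ 2) ^ p).stronglyMeasurable.stronglyMeasurableAtFilter)
    (ContinuousAt.rpow_const (f := fun t : ℝ => 1 - t ^ 2) (by fun_prop) (Or.inl (by nlinarith)))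

noncomputable def profile (p x : ℝ) : ℝ :=
  (p + 1 / 2) * (∫ t in x..1, (1 - t ^ 2) ^ p) + x / 2 * (1 - x ^ 2) ^ p

theorem hasDerivAt_profile {p x : ℝ} (hp : -1 < p) (hx : -1 < x) (hx1 : x < 1) :
    HasDerivAt (profile p) (-p * (1 - x ^ 2) ^ (p - 1)) x := by
  have hpos : 0 < 1 - x ^ 2 := by nlinarith
  have hpow : HasDerivAt (fun y => (1 - y ^ 2) ^ p) (-(2 * x) * p * (1 - x ^ 2) ^ (p - 1)) x := by
    simpa using ((hasDerivAt_id x).pow 2).const_sub 1 |>.rpow_const (p := p) (Or.inl hpos.ne')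
  have := ((hasDerivAt_integral_one_sub_sq_rpow hp hx hx1).const_mul (p + 1 / 2)).add
    (((hasDerivAt_id x).div_const 2).mul hpow)
  refine this.congr_deriv ?_
  rw [Real.rpow_sub_one hpos.ne']
  field_simp
  simp only [id]
  ring

theorem hasDerivAt_two_div_mul_sqrt {γ ω : ℝ} (hγ : γ ≠ 0) (hω : 0 < ω) :
    HasDerivAt (fun ω => 2 / (γ * Real.sqrt ω)) (-(γ * ω ^ ((3 : ℝ) / 2))⁻¹) ω := by
  have hs := Real.sqrt_pos.2 hω
  refine ((((Real.hasDerivAt_sqrt hω.ne').const_mul γ).inv (by positivity)).const_mul 2).congr_deriv ?_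
  rw [show ω ^ ((3 : ℝ) / 2) = ω * Real.sqrt ω by
    rw [Real.sqrt_eq_rpow, ← Real.rpow_one_add' hω.le (by norm_num)]; norm_num]
  field_simp
  rw [Real.sq_sqrt hω.le]

theorem two_div_mul_sqrt_sq (γ : ℝ) {ω : ℝ} (hω : 0 ≤ ω) :
    (2 / (γ * Real.sqrt ω)) ^ 2 = 4 / (γ ^ 2 * ω) := by
  rw [div_pow, mul_pow, Real.sq_sqrt hω]
  norm_num

theorem four_div_sq_mul_lt_one {γ ω : ℝ} (hγ : γ ≠ 0) (hω : 4 / γ ^ 2 < ω) :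
    4 / (γ ^ 2 * ω) < 1 := by
  have hγ2 : 0 < γ ^ 2 := by positivity
  rw [div_lt_one (by nlinarith [div_pos four_pos hγ2])]
  rwa [div_lt_iff₀' hγ2] at hω

theorem formula_eq_profile {μ γ ω : ℝ} (hμ : μ ≠ 0) (hω : 0 ≤ ω) :
    (2 - μ) / (2 * μ) * (∫ t in (2 / (γ * Real.sqrt ω))..1, (1 - t ^ 2) ^ (1 / μ - 1)) +
        (γ * Real.sqrt ω)⁻¹ * (1 - 4 / (γ ^ 2 * ω)) ^ (1 / μ - 1) =
      profile (1 / μ - 1) (2 / (γ * Real.sqrt ω)) := by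
  rw [profile, two_div_mul_sqrt_sq γ hω]
  congr 2
  · field_simp
    ring
  · ring

theorem hasDerivAt_profile_two_div_mul_sqrt {μ γ ω : ℝ} (hμ : 0 < μ) (hγ : γ ≠ 0)
    (hω : 4 / γ ^ 2 < ω) :
    HasDerivAt (fun ω => profile (1 / μ - 1) (2 / (γ * Real.sqrt ω)))
      (-(γ * ω ^ ((3 : ℝ) / 2))⁻¹ * (1 - 1 / μ) * (1 - 4 / (γ ^ 2 * ω)) ^ (1 / μ - 2)) ω := by
  have hω0 : 0 < ω := lt_trans (by positivity) hω
  have hp : -1 < 1 / μ - 1 := by linarith [one_div_pos.2 hμ]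
  have hx : |2 / (γ * Real.sqrt ω)| < 1 := by
    rw [← sq_lt_one_iff_abs_lt_one, two_div_mul_sqrt_sq γ hω0.le]
    exact four_div_sq_mul_lt_one hγ hω
  refine ((hasDerivAt_profile hp (abs_lt.1 hx).1 (abs_lt.1 hx).2).comp ω
    (hasDerivAt_two_div_mul_sqrt hγ hω0)).congr_deriv ?_
  rw [two_div_mul_sqrt_sq γ hω0.le, show 1 / μ - 1 - 1 = 1 / μ - 2 by ring]
  ring

theorem stmt18 (μ γ : ℝ) (hμ : 0 < μ) (hγ : 0 < γ)
    (r : ℝ → ℝ)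
    (hr : ∀ ω : ℝ, r ω =
      ((2-μ)/(2*μ)) * (∫ t in (2/(γ*Real.sqrt ω))..1, (1-t^2) ^ (1/μ-1)) +
        (γ*Real.sqrt ω)⁻¹ * (1 - 4/(γ^2*ω)) ^ (1/μ-1)) :
    (∀ ω : ℝ, 4/γ^2 < ω → ω ≤ 4*(μ+1)/(γ^2*μ) →
      HasDerivAt r (-(γ*ω ^ ((3:ℝ)/2))⁻¹ * (1 - 1/μ) * (1 - 4/(γ^2*ω)) ^ (1/μ-2)) ω) ∧
    (1 < μ → StrictAntiOn r (Ioc (4/γ^2) (4*(μ+1)/(γ^2*μ)))) := by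
  have hderiv (ω : ℝ) (hω : 4 / γ ^ 2 < ω) :
      HasDerivAt r (-(γ*ω ^ ((3:ℝ)/2))⁻¹ * (1 - 1/μ) * (1 - 4/(γ^2*ω)) ^ (1/μ-2)) ω := by
    have hω0 : 0 < ω := lt_trans (by positivity) hω
    refine (hasDerivAt_profile_two_div_mul_sqrt hμ hγ.ne' hω).congr_of_eventuallyEq ?_
    filter_upwards [lt_mem_nhds hω0] with y hy
    rw [hr, formula_eq_profile hμ.ne' hy.le]
  refine ⟨fun ω hω _ => hderiv ω hω, fun hμ1 => ?_⟩
  refine StrictAntiOn.mono ?_ Ioc_subset_Ioi_self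
  refine strictAntiOn_of_hasDerivWithinAt_neg (convex_Ioi _)
    (f' := fun ω => -(γ*ω ^ ((3:ℝ)/2))⁻¹ * (1 - 1/μ) * (1 - 4/(γ^2*ω)) ^ (1/μ-2))
    (fun ω hω => (hderiv ω hω).continuousAt.continuousWithinAt) (fun ω hω => ?_) (fun ω hω => ?_)
    <;> rw [interior_Ioi] at hω
  · exact (hderiv ω hω).hasDerivWithinAt
  · have hω0 : 0 < ω := lt_trans (by positivity) hω
    have hA : 0 < 1 - 4 / (γ ^ 2 * ω) := sub_pos.2 (four_div_sq_mul_lt_one hγ.ne' hω)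
    have hμ' : 0 < 1 - 1 / μ := sub_pos.2 ((div_lt_one hμ).2 hμ1)
    rw [neg_mul, neg_mul, neg_lt_zero]
    exact mul_pos (mul_pos (by positivity) hμ') (Real.rpow_pos_of_pos hA _)
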